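/- arXiv:1910.09322 — 2 statements merged into one kernel-verified Lean document; each statement's English description precedes it below -/
import Mathlib

section
/- Telescoped upper bound on the MoVI Bellman image. For every k ≥ 0, the MoVI iterates satisfy, componentwise, (k+1) T_{π_{k+1}} h_k ≤ Σ_{j=1}^{k+1} q_j − Σ_{j=1}^{k+1} ε_j. -/
open Finset MeasureTheory
open scoped MeasureTheory

noncomputable section

namespace MoVIFormal

variable {S A : Type} [Fintype S] [Fintype A] [Nonempty S] [Nonempty A]
  [DecidableEq S] [DecidableEq A]

/-- `P` is a transition kernel: `P sa s'` is the probability of moving to `s'` from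
state-action pair `sa`. -/
def IsKernel (P : S × A → S → ℝ) : Prop :=
  (∀ sa s', 0 ≤ P sa s') ∧ ∀ sa, ∑ s', P sa s' = 1

/-- The operator `P_π` acting on `q`-functions. -/
def Pop (P : S × A → S → ℝ) (π : S → A) (q : S × A → ℝ) : S × A → ℝ :=
  fun sa => ∑ s', P sa s' * q (s', π s')

/-- The Bellman evaluation operator `T_π q = r + γ P_π q`. -/
def Tpol (P : S × A → S → ℝ) (r : S × A → ℝ) (γ : ℝ) (π : S → A) (q : S × A → ℝ) :
    S × A → ℝ :=
  fun sa => r sa + γ * Pop P π q sa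

/-- The Bellman optimality operator `T_*`. -/
def Topt (P : S × A → S → ℝ) (r : S × A → ℝ) (γ : ℝ) (q : S × A → ℝ) : S × A → ℝ :=
  fun sa => r sa + γ * ∑ s', P sa s' * (⨆ a', q (s', a'))

/-- `π` is greedy with respect to `q`: `T_π q = T_* q`. -/
def Greedy (P : S × A → S → ℝ) (r : S × A → ℝ) (γ : ℝ) (π : S → A) (q : S × A → ℝ) :
    Prop :=
  Tpol P r γ π q = Topt P r γ q

/-- The stochastic matrix of the operator `P_π`, so that `P_π q = (Pmat P π).mulVec q`. -/
def Pmat (P : S × A → S → ℝ) (π : S → A) : Matrix (S × A) (S × A) ℝ :=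
  fun sa sa' => if sa'.2 = π sa'.1 then P sa sa'.1 else 0

/-- The resolvent matrix `(I - γ P_π)⁻¹`. -/
def Res (P : S × A → S → ℝ) (γ : ℝ) (π : S → A) : Matrix (S × A) (S × A) ℝ :=
  (1 - γ • Pmat P π)⁻¹

/-- The composed kernels `P_{j:i} = P_{π_j} P_{π_{j-1}} ⋯ P_{π_i}` for `i ≤ j`,
and the identity otherwise. -/
def Pcomp (P : S × A → S → ℝ) (π : ℕ → S → A) (j i : ℕ) : Matrix (S × A) (S × A) ℝ :=
  (((List.range' i (j + 1 - i)).reverse).map fun t => Pmat P (π t)).prod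

/-- The MoVI iterates: `π (k+1)` is greedy w.r.t. `h k`,
`q (k+1) = T_{π (k+1)} (q k) + ε (k+1)` and `h k` is the running average of `q 0, …, q k`. -/
def IsMoVI (P : S × A → S → ℝ) (r : S × A → ℝ) (γ : ℝ)
    (π : ℕ → S → A) (q h : ℕ → S × A → ℝ) (ε : ℕ → S × A → ℝ) : Prop :=
  h 0 = q 0 ∧
  (∀ k : ℕ, Greedy P r γ (π (k + 1)) (h k)) ∧
  (∀ k : ℕ, q (k + 1) = fun sa => Tpol P r γ (π (k + 1)) (q k) sa + ε (k + 1) sa) ∧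
  (∀ k : ℕ, h (k + 1) = fun sa => ((k + 1 : ℝ) * h k sa + q (k + 1) sa) / (k + 2))

/-- The negative cumulative error `E_k = -∑_{j=1}^k ε_j`. -/
def Ecum (ε : ℕ → S × A → ℝ) (k : ℕ) : S × A → ℝ :=
  fun sa => -(∑ j ∈ Finset.Icc 1 k, ε j sa)

/-- The weighted negative cumulative error
`E'_{k,j} = -∑_{i=1}^{k-j} P_{i+j:i+1} (I - γ P_{π_i}) ε_i`. -/
def Ew (P : S × A → S → ℝ) (γ : ℝ) (π : ℕ → S → A) (ε : ℕ → S × A → ℝ)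
    (k j : ℕ) : S × A → ℝ :=
  fun sa =>
    -(∑ i ∈ Finset.Icc 1 (k - j),
        (Pcomp P π (i + j) (i + 1)).mulVec ((1 - γ • Pmat P (π i)).mulVec (ε i)) sa)

/-- Supremum norm of a `q`-function. -/
def supNorm (q : S × A → ℝ) : ℝ := ⨆ sa : S × A, |q sa|

/-- `μ`-weighted `ℓ1`-norm of a `q`-function. -/
def l1Norm (μ : S × A → ℝ) (q : S × A → ℝ) : ℝ := ∑ sa, μ sa * |q sa|

/-- `μ` is a probability distribution on `S × A`. -/
def IsDist (μ : S × A → ℝ) : Prop :=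
  (∀ sa, 0 ≤ μ sa) ∧ ∑ sa, μ sa = 1

/-- The discounted cumulative occupancy measure `d_{π,μ} = (1-γ) μ (I - γ P_π)⁻¹`. -/
def docc (P : S × A → S → ℝ) (γ : ℝ) (μ : S × A → ℝ) (π : S → A) : S × A → ℝ :=
  (1 - γ) • Matrix.vecMul μ (Res P γ π)

/-- Operator norm induced by the supremum norm (maximum absolute row sum). -/
def opNormInf (M : Matrix (S × A) (S × A) ℝ) : ℝ :=
  ⨆ sa : S × A, ∑ sa', |M sa sa'|

/-! Multiplying the averaging step by `k + 2` and using that `T_π` is affine gives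
`(k+2) T_π h_{k+1} = (k+1) T_π h_k + T_π q_{k+1}`. For `π = π_{k+2}`, greediness of `π_{k+1}`
with respect to `h_k` bounds the first term by `(k+1) T_{π_{k+1}} h_k`, and the second term is
`q_{k+2} - ε_{k+2}`; the bound then telescopes by induction on `k`. -/

section Bellman

omit [Fintype A] [Nonempty S] [Nonempty A] [DecidableEq S] [DecidableEq A]

variable (P : S × A → S → ℝ) (r : S × A → ℝ) (γ : ℝ)

theorem Pop_linearCombination (π : S → A) (f g : S × A → ℝ) (a b : ℝ) (sa : S × A) :
    Pop P π (fun x => a * f x + b * g x) sa = a * Pop P π f sa + b * Pop P π g sa := by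
  simp only [Pop, Finset.mul_sum, ← Finset.sum_add_distrib]
  exact Finset.sum_congr rfl fun _ _ => by ring

theorem Tpol_affineCombination (π : S → A) (f g : S × A → ℝ) {a b : ℝ} (hab : a + b = 1)
    (sa : S × A) :
    Tpol P r γ π (fun x => a * f x + b * g x) sa =
      a * Tpol P r γ π f sa + b * Tpol P r γ π g sa := by
  simp only [Tpol, Pop_linearCombination]
  linear_combination (-r sa) * hab

variable {P γ}

theorem Tpol_le_Topt [Finite A] (hP : ∀ sa s', 0 ≤ P sa s') (hγ : 0 ≤ γ) (π : S → A)
    (f : S × A → ℝ) (sa : S × A) : Tpol P r γ π f sa ≤ Topt P r γ f sa := by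
  unfold Tpol Topt Pop
  gcongr with s' _
  · exact hP sa s'
  · exact le_ciSup (f := fun a => f (s', a)) (Set.finite_range _).bddAbove (π s')

theorem Greedy.Tpol_le [Finite A] (hP : ∀ sa s', 0 ≤ P sa s') (hγ : 0 ≤ γ) {π : S → A}
    {f : S × A → ℝ} (hπ : Greedy P r γ π f) (π' : S → A) (sa : S × A) :
    Tpol P r γ π' f sa ≤ Tpol P r γ π f sa :=
  hπ ▸ Tpol_le_Topt r hP hγ π' f sa

end Bellman

namespace IsMoVI

omit [Fintype A] [Nonempty S] [Nonempty A] [DecidableEq S] [DecidableEq A]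

variable {P : S × A → S → ℝ} {r : S × A → ℝ} {γ : ℝ} {π : ℕ → S → A}
  {q h ε : ℕ → S × A → ℝ}

theorem Tpol_q_eq_sub (hmovi : IsMoVI P r γ π q h ε) (j : ℕ) (sa : S × A) :
    Tpol P r γ (π (j + 1)) (q j) sa = q (j + 1) sa - ε (j + 1) sa := by
  rw [hmovi.2.2.1 j]
  ring

theorem mul_Tpol_h_succ (hmovi : IsMoVI P r γ π q h ε) (k : ℕ) (π' : S → A) (sa : S × A) :
    (k + 2 : ℝ) * Tpol P r γ π' (h (k + 1)) sa =
      (k + 1) * Tpol P r γ π' (h k) sa + Tpol P r γ π' (q (k + 1)) sa := by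
  have h_succ : h (k + 1) = fun x => (k + 1) / (k + 2) * h k x + 1 / (k + 2) * q (k + 1) x := by
    rw [hmovi.2.2.2 k]
    funext x
    ring
  rw [h_succ, Tpol_affineCombination P r γ π' _ _ (by field_simp; ring)]
  field_simp

theorem mul_Tpol_le_sum [Finite A] (hP : ∀ sa s', 0 ≤ P sa s') (hγ : 0 ≤ γ)
    (hmovi : IsMoVI P r γ π q h ε) (k : ℕ) (sa : S × A) :
    (k + 1 : ℝ) * Tpol P r γ (π (k + 1)) (h k) sa ≤
      ∑ j ∈ Finset.Icc 1 (k + 1), (q j sa - ε j sa) := by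
  induction k with
  | zero => simp [hmovi.1, hmovi.Tpol_q_eq_sub 0]
  | succ k ih =>
    rw [Finset.sum_Icc_succ_top (by omega), ← hmovi.Tpol_q_eq_sub (k + 1)]
    push_cast
    calc ((k : ℝ) + 1 + 1) * Tpol P r γ (π (k + 1 + 1)) (h (k + 1)) sa
        = (k + 1) * Tpol P r γ (π (k + 2)) (h k) sa + Tpol P r γ (π (k + 2)) (q (k + 1)) sa := by
          rw [← hmovi.mul_Tpol_h_succ]
          ring
      _ ≤ (k + 1) * Tpol P r γ (π (k + 1)) (h k) sa + Tpol P r γ (π (k + 2)) (q (k + 1)) sa := by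
          gcongr
          exact (hmovi.2.1 k).Tpol_le r hP hγ _ sa
      _ ≤ _ := by gcongr

end IsMoVI

theorem movi_bellman_image_upper_bound_general (P : S × A → S → ℝ) (hP : IsKernel P)
    (r : S × A → ℝ) (γ : ℝ) (hγ0 : 0 < γ)
    (π : ℕ → S → A) (q h : ℕ → S × A → ℝ) (ε : ℕ → S × A → ℝ)
    (hmovi : IsMoVI P r γ π q h ε) (k : ℕ) :
    ∀ sa : S × A,
      (k + 1 : ℝ) * Tpol P r γ (π (k + 1)) (h k) sa ≤
        (∑ j ∈ Finset.Icc 1 (k + 1), q j sa) - ∑ j ∈ Finset.Icc 1 (k + 1), ε j sa := by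
  intro sa
  rw [← Finset.sum_sub_distrib]
  exact hmovi.mul_Tpol_le_sum hP.1 hγ0.le k sa

/-- Telescoped upper bound on the MoVI Bellman image. -/
theorem movi_bellman_image_upper_bound (P : S × A → S → ℝ) (hP : IsKernel P)
    (r : S × A → ℝ) (γ : ℝ) (hγ0 : 0 < γ) (hγ1 : γ < 1)
    (π : ℕ → S → A) (q h : ℕ → S × A → ℝ) (ε : ℕ → S × A → ℝ)
    (hmovi : IsMoVI P r γ π q h ε) (k : ℕ) :
    ∀ sa : S × A,
      (k + 1 : ℝ) * Tpol P r γ (π (k + 1)) (h k) sa ≤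
        (∑ j ∈ Finset.Icc 1 (k + 1), q j sa) - ∑ j ∈ Finset.Icc 1 (k + 1), ε j sa :=
  movi_bellman_image_upper_bound_general P hP r γ hγ0 π q h ε hmovi k

end MoVIFormal
end
end

section
/- ψ-form rewriting of MoVI. Define ψ_k = (k+1) h_k for k ≥ 0 (so ψ_k = Σ_{j=0}^{k} q_j) and ψ_{−1} = 0. Then for every k ≥ 1 the MoVI iterates satisfy ψ_k = ψ_{k−1} + T_{π_k} ψ_{k−1} − γ P_{π_k} ψ_{k−2} + ε_k, where T_π v = r + γ P_π v. -/
open Finset MeasureTheory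
open scoped MeasureTheory

noncomputable section

namespace MoVIFormal

variable {S A : Type} [Fintype S] [Fintype A] [Nonempty S] [Nonempty A]
  [DecidableEq S] [DecidableEq A]

/-! Scaling the running average `h k` by `k + 1` gives the running sum `ψ_k = ψ_{k-1} + q_k`, so
`q_{k-1} = ψ_{k-1} - ψ_{k-2}`; since `T_π` is affine with linear part `γ P_π`, substituting this
into `q_k = T_{π_k} q_{k-1} + ε_k` yields the ψ-form. -/

omit [Fintype A] [Nonempty S] [Nonempty A] [DecidableEq S] [DecidableEq A] in
theorem Pop_sub (P : S × A → S → ℝ) (π : S → A) (f g : S × A → ℝ) :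
    Pop P π (f - g) = Pop P π f - Pop P π g := by
  ext sa
  simp only [Pop, Pi.sub_apply, mul_sub, Finset.sum_sub_distrib]

omit [Fintype A] [Nonempty S] [Nonempty A] [DecidableEq S] [DecidableEq A] in
theorem Tpol_sub (P : S × A → S → ℝ) (r : S × A → ℝ) (γ : ℝ) (π : S → A)
    (f g : S × A → ℝ) :
    Tpol P r γ π (f - g) = Tpol P r γ π f - γ • Pop P π g := by
  ext sa
  simp only [Tpol, Pop_sub, Pi.sub_apply, Pi.smul_apply, smul_eq_mul]
  ring

theorem scaledAvg_succ_eq_add {ι : Type*} {q h Ψ : ℕ → ι → ℝ} (h0 : h 0 = q 0)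
    (hh : ∀ k : ℕ, h (k + 1) = fun x => ((k + 1 : ℝ) * h k x + q (k + 1) x) / (k + 2))
    (hΨ0 : Ψ 0 = fun _ => 0) (hΨ : ∀ k : ℕ, Ψ (k + 1) = fun x => (k + 1 : ℝ) * h k x)
    (k : ℕ) : Ψ (k + 1) = Ψ k + q k := by
  ext x
  rw [Pi.add_apply]
  cases k with
  | zero => simp [hΨ, hΨ0, h0]
  | succ m =>
    rw [hΨ (m + 1), hΨ m, hh m]
    push_cast
    field_simp
    ring

theorem movi_psi_form_general (P : S × A → S → ℝ)
    (r : S × A → ℝ) (γ : ℝ)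
    (π : ℕ → S → A) (q h : ℕ → S × A → ℝ) (ε : ℕ → S × A → ℝ)
    (hmovi : IsMoVI P r γ π q h ε)
    (Ψ : ℕ → S × A → ℝ) (hΨ0 : Ψ 0 = fun _ => 0)
    (hΨ : ∀ k : ℕ, Ψ (k + 1) = fun sa => (k + 1 : ℝ) * h k sa) :
    ∀ k : ℕ, 1 ≤ k → ∀ sa : S × A,
      Ψ (k + 1) sa =
        Ψ k sa + Tpol P r γ (π k) (Ψ k) sa - γ * Pop P (π k) (Ψ (k - 1)) sa + ε k sa := by
  obtain ⟨h0, -, hq, hh⟩ := hmovi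
  have hΨ_succ := scaledAvg_succ_eq_add h0 hh hΨ0 hΨ
  rintro (_ | m) hm sa
  · omega
  have hq_m : q m = Ψ (m + 1) - Ψ m := by
    rw [hΨ_succ m, add_sub_cancel_left]
  rw [Nat.add_sub_cancel, hΨ_succ (m + 1), hq m, hq_m, Tpol_sub]
  simp only [Pi.add_apply, Pi.sub_apply, Pi.smul_apply, smul_eq_mul]
  ring

/-- ψ-form rewriting of MoVI (with `Ψ (k+1) = ψ_k` and `Ψ 0 = ψ_{-1} = 0`). -/
theorem movi_psi_form (P : S × A → S → ℝ) (hP : IsKernel P)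
    (r : S × A → ℝ) (γ : ℝ) (hγ0 : 0 < γ) (hγ1 : γ < 1)
    (π : ℕ → S → A) (q h : ℕ → S × A → ℝ) (ε : ℕ → S × A → ℝ)
    (hmovi : IsMoVI P r γ π q h ε)
    (Ψ : ℕ → S × A → ℝ) (hΨ0 : Ψ 0 = fun _ => 0)
    (hΨ : ∀ k : ℕ, Ψ (k + 1) = fun sa => (k + 1 : ℝ) * h k sa) :
    ∀ k : ℕ, 1 ≤ k → ∀ sa : S × A,
      Ψ (k + 1) sa =
        Ψ k sa + Tpol P r γ (π k) (Ψ k) sa - γ * Pop P (π k) (Ψ (k - 1)) sa + ε k sa :=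
  movi_psi_form_general P r γ π q h ε hmovi Ψ hΨ0 hΨ

end MoVIFormal
end
end
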